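/- Let G be a graph with an RDV representation, let v maximize y(t(v)), and restrict each neighbour path P(w) to its portion at depth at most y(t(v)). If the neighbours of v are sorted as w_1,...,w_k by decreasing depth y(t(w_i)) of their top endpoints, then the restricted paths satisfy P'(w_1) ⊆ P'(w_2) ⊆ ... ⊆ P'(w_k). -/

import Mathlib

namespace Paper

/-- Has vertex `v` already been matched by the edge list `M`? -/
def matchedB {n : ℕ} (M : List (Fin n × Fin n)) (v : Fin n) : Bool :=
  M.any fun e => e.1 = v || e.2 = v

/-- One step of the greedy matching algorithm: process vertex `i`; if it is unmatched
and has an unmatched neighbour, match it to the unmatched neighbour of smallest index. -/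
def greedyStep {n : ℕ} (G : SimpleGraph (Fin n)) [DecidableRel G.Adj]
    (M : List (Fin n × Fin n)) (i : Fin n) : List (Fin n × Fin n) :=
  if matchedB M i then M
  else
    if h : (Finset.univ.filter fun j => G.Adj i j ∧ matchedB M j = false).Nonempty then
      (i, (Finset.univ.filter fun j => G.Adj i j ∧ matchedB M j = false).min' h) :: M
    else M

/-- The greedy matching algorithm, processing the vertices `v_1, …, v_n` in order. -/
def greedy {n : ℕ} (G : SimpleGraph (Fin n)) [DecidableRel G.Adj] : List (Fin n × Fin n) :=
  (List.finRange n).foldl (greedyStep G) []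

/-- The partial matching produced by the greedy algorithm after processing the
first `k` vertices. -/
def greedyPrefix {n : ℕ} (G : SimpleGraph (Fin n)) [DecidableRel G.Adj] (k : ℕ) :
    List (Fin n × Fin n) :=
  ((List.finRange n).take k).foldl (greedyStep G) []

/-- One step of the delayed greedy algorithm: state is (matching, free set `F`);
when processing `j`, if `j` has a neighbour in `F`, match `j` to the smallest-index
such neighbour and remove it from `F`; otherwise add `j` to `F`. -/
def delayedStep {n : ℕ} (G : SimpleGraph (Fin n)) [DecidableRel G.Adj]
    (s : List (Fin n × Fin n) × Finset (Fin n)) (j : Fin n) :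
    List (Fin n × Fin n) × Finset (Fin n) :=
  if h : (s.2.filter fun i => G.Adj i j).Nonempty then
    (((s.2.filter fun i => G.Adj i j).min' h, j) :: s.1,
      s.2.erase ((s.2.filter fun i => G.Adj i j).min' h))
  else (s.1, insert j s.2)

/-- The delayed greedy matching algorithm. -/
def delayedGreedy {n : ℕ} (G : SimpleGraph (Fin n)) [DecidableRel G.Adj] :
    List (Fin n × Fin n) :=
  ((List.finRange n).foldl (delayedStep G) ([], ∅)).1

/-- `M` is a matching of `G`: its members are edges of `G` and are pairwise
vertex-disjoint. -/
def IsMatchingL {n : ℕ} (G : SimpleGraph (Fin n)) (M : List (Fin n × Fin n)) : Prop :=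
  (∀ e ∈ M, G.Adj e.1 e.2) ∧
    ∀ e ∈ M, ∀ f ∈ M, e ≠ f → e.1 ≠ f.1 ∧ e.1 ≠ f.2 ∧ e.2 ≠ f.1 ∧ e.2 ≠ f.2

/-- A finite rooted tree on node set `Fin N`, given by a parent function and a
depth function (distance to the root). -/
structure RootedTree (N : ℕ) where
  parent : Fin N → Fin N
  root : Fin N
  depth : Fin N → ℕ
  depth_root : depth root = 0
  parent_root : parent root = root
  depth_parent : ∀ i, i ≠ root → depth (parent i) + 1 = depth i

/-- `T.Anc u w` : node `u` is an ancestor (possibly equal) of node `w`. -/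
def RootedTree.Anc {N : ℕ} (T : RootedTree N) (u w : Fin N) : Prop :=
  ∃ k : ℕ, T.parent^[k] w = u

/-- A node is a leaf if it has no children. -/
def RootedTree.IsLeaf {N : ℕ} (T : RootedTree N) (u : Fin N) : Prop :=
  ∀ w, T.parent w = u → w = u

/-- The data of an RDV representation: a rooted host tree `T` and, for each vertex `v`,
a downward path `P(v)` going from its top node `t v` down to its bottom node `b v`. -/
structure RDVData (N n : ℕ) where
  T : RootedTree N
  t : Fin n → Fin N
  b : Fin n → Fin N
  downward : ∀ v, T.Anc (t v) (b v)

/-- The node `u` lies on the downward path `P(v)`. -/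
def RDVData.onPath {N n : ℕ} (R : RDVData N n) (v : Fin n) (u : Fin N) : Prop :=
  R.T.Anc (R.t v) u ∧ R.T.Anc u (R.b v)

/-- `R` is an RDV representation of `G`: distinct vertices are adjacent iff their
downward paths share a node. -/
def RDVData.IsRep {N n : ℕ} (R : RDVData N n) (G : SimpleGraph (Fin n)) : Prop :=
  ∀ u w : Fin n, u ≠ w → (G.Adj u w ↔ ∃ node, R.onPath u node ∧ R.onPath w node)

/-- The identity enumeration `v_1, …, v_n` (i.e. the order on `Fin n`) is a bottom-up
enumeration: vertices are sorted by decreasing depth of the top node `t v`. -/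
def RDVData.BottomUp {N n : ℕ} (R : RDVData N n) : Prop :=
  ∀ i j : Fin n, i ≤ j → R.T.depth (R.t j) ≤ R.T.depth (R.t i)

/-- A planar (left-to-right) coordinate structure on a rooted tree: an injective
index on the leaves so that the leaf descendants of every node occupy a contiguous
range of indices, together with the leftmost leaf descendant `lmost` and rightmost
leaf descendant `rmost` of every node. -/
structure PlanarCoords {N : ℕ} (T : RootedTree N) where
  idx : Fin N → ℕ
  lmost : Fin N → Fin N
  rmost : Fin N → Fin N
  idx_inj : ∀ u w, T.IsLeaf u → T.IsLeaf w → idx u = idx w → u = w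
  lmost_leaf : ∀ u, T.IsLeaf (lmost u)
  lmost_desc : ∀ u, T.Anc u (lmost u)
  lmost_min : ∀ u lf, T.IsLeaf lf → T.Anc u lf → idx (lmost u) ≤ idx lf
  rmost_leaf : ∀ u, T.IsLeaf (rmost u)
  rmost_desc : ∀ u, T.Anc u (rmost u)
  rmost_max : ∀ u lf, T.IsLeaf lf → T.Anc u lf → idx lf ≤ idx (rmost u)
  contiguous : ∀ u lf lf' lf'', T.IsLeaf lf → T.IsLeaf lf' → T.IsLeaf lf'' →
    T.Anc u lf → T.Anc u lf' → idx lf ≤ idx lf'' → idx lf'' ≤ idx lf' → T.Anc u lf''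

/-- The x-coordinate of a node: the index of its leftmost leaf descendant. -/
def PlanarCoords.x {N : ℕ} {T : RootedTree N} (P : PlanarCoords T) (u : Fin N) : ℕ :=
  P.idx (P.lmost u)

/-- The closed neighbourhood `N[v]`. -/
def closedNbr {n : ℕ} (G : SimpleGraph (Fin n)) (v : Fin n) : Set (Fin n) :=
  insert v {w | G.Adj v w}

/-- `v` is a simple vertex: `N[v]` is a clique that can be ordered
`w_1, …, w_k` with `N[w_1] ⊆ N[w_2] ⊆ … ⊆ N[w_k]`. -/
def IsSimpleVx {n : ℕ} (G : SimpleGraph (Fin n)) (v : Fin n) : Prop :=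
  G.IsClique (closedNbr G v) ∧
    ∃ l : List (Fin n), (∀ w, w ∈ l ↔ w ∈ closedNbr G v) ∧
      l.Chain' fun a b => closedNbr G a ⊆ closedNbr G b

/-- The subgraph of `G` induced by the tail vertices `{v_i, …, v_n}`. -/
def tailGraph {n : ℕ} (G : SimpleGraph (Fin n)) (i : Fin n) : SimpleGraph (Fin n) where
  Adj a b := G.Adj a b ∧ i ≤ a ∧ i ≤ b
  symm := ⟨fun a b h => ⟨h.1.symm, h.2.2, h.2.1⟩⟩
  loopless := ⟨fun a h => G.loopless.irrefl a h.1⟩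

/-- `G` is chordal: every cycle of length at least 4 has a chord, i.e. an edge
between two (necessarily non-consecutive) vertices of the cycle that is not an
edge of the cycle. -/
def Chordal {V : Type*} (G : SimpleGraph V) : Prop :=
  ∀ (v : V) (c : G.Walk v v), c.IsCycle → 4 ≤ c.length →
    ∃ u w, u ∈ c.support ∧ w ∈ c.support ∧ G.Adj u w ∧ s(u, w) ∉ c.edges

/-- `S` is (the node set of) a subtree of the rooted tree `T`. -/
def IsSubtree {N : ℕ} (T : RootedTree N) (S : Set (Fin N)) : Prop :=
  S.Nonempty ∧ ∃ top ∈ S, (∀ u ∈ S, T.Anc top u) ∧ ∀ u ∈ S, u ≠ top → T.parent u ∈ S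

/-!
Every neighbour `w` of `v` shares a node with `P(v)`; as `t(w)` is no deeper than `t(v)`, both
`t(w)` and `t(v)` are ancestors of that node, so `t(w)` is an ancestor of `t(v)` and `P(w)` passes
through `t(v)`. Hence the restriction `P'(w)` is exactly the vertical segment from `t(w)` down to
`t(v)`, and such segments, all ending at `t(v)`, are nested according to the depth of their tops.
-/

namespace RootedTree

variable {N : ℕ} {T : RootedTree N}

theorem Anc.refl (u : Fin N) : T.Anc u u := ⟨0, rfl⟩

theorem Anc.trans {a b c : Fin N} (hab : T.Anc a b) (hbc : T.Anc b c) : T.Anc a c := by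
  obtain ⟨k, rfl⟩ := hab
  obtain ⟨j, rfl⟩ := hbc
  exact ⟨k + j, Function.iterate_add_apply _ _ _ _⟩

theorem depth_parent_le (u : Fin N) : T.depth (T.parent u) ≤ T.depth u := by
  by_cases hu : u = T.root
  · rw [hu, T.parent_root]
  · exact (T.depth_parent u hu).le.trans' (Nat.le_succ _)

/-- Each step strictly decreases the depth until the root, which is fixed, is reached. -/
theorem iterate_parent_eq_self_of_depth_le (k : ℕ) (u : Fin N)
    (h : T.depth u ≤ T.depth (T.parent^[k] u)) : T.parent^[k] u = u := by
  induction k with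
  | zero => rfl
  | succ k ih =>
    rw [Function.iterate_succ_apply'] at h ⊢
    have hk : T.parent^[k] u = u := ih (h.trans (depth_parent_le _))
    rw [hk] at h ⊢
    by_contra hne
    have hroot : u ≠ T.root := fun hr => hne (hr ▸ T.parent_root)
    have := T.depth_parent u hroot
    omega

theorem Anc.eq_of_depth_le {u w : Fin N} (h : T.Anc u w) (hd : T.depth w ≤ T.depth u) :
    u = w := by
  obtain ⟨k, rfl⟩ := h
  exact iterate_parent_eq_self_of_depth_le k w hd

theorem Anc.total {u u' w : Fin N} (h : T.Anc u w) (h' : T.Anc u' w) :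
    T.Anc u u' ∨ T.Anc u' u := by
  obtain ⟨k, rfl⟩ := h
  obtain ⟨j, rfl⟩ := h'
  rcases le_total k j with hkj | hjk
  · exact Or.inr ⟨j - k, by rw [← Function.iterate_add_apply, Nat.sub_add_cancel hkj]⟩
  · exact Or.inl ⟨k - j, by rw [← Function.iterate_add_apply, Nat.sub_add_cancel hjk]⟩

theorem Anc.anc_of_depth_le {u u' w : Fin N} (h : T.Anc u w) (h' : T.Anc u' w)
    (hd : T.depth u' ≤ T.depth u) : T.Anc u' u := by
  rcases h.total h' with huu' | hu'u
  · rw [huu'.eq_of_depth_le hd]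
    exact Anc.refl u'
  · exact hu'u

end RootedTree

namespace RDVData

variable {N n : ℕ} (R : RDVData N n)

theorem onPath_top_of_onPath {v w : Fin n} {x : Fin N} (hv : R.onPath v x) (hw : R.onPath w x)
    (hd : R.T.depth (R.t w) ≤ R.T.depth (R.t v)) : R.onPath w (R.t v) :=
  ⟨hv.1.anc_of_depth_le hw.1 hd, hv.1.trans hw.2⟩

theorem onPath_top_of_adj {G : SimpleGraph (Fin n)} (hrep : R.IsRep G) {v w : Fin n}
    (hadj : G.Adj v w) (hd : R.T.depth (R.t w) ≤ R.T.depth (R.t v)) : R.onPath w (R.t v) := by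
  obtain ⟨x, hv, hw⟩ := (hrep v w hadj.ne).mp hadj
  exact R.onPath_top_of_onPath hv hw hd

theorem restrictedPath_subset {a b : Fin n} {x : Fin N} (ha : R.onPath a x) (hb : R.onPath b x)
    (hd : R.T.depth (R.t b) ≤ R.T.depth (R.t a)) :
    {u | R.onPath a u ∧ R.T.depth u ≤ R.T.depth x} ⊆
      {u | R.onPath b u ∧ R.T.depth u ≤ R.T.depth x} := by
  rintro u ⟨hu, hux⟩
  have htop : R.T.Anc (R.t b) (R.t a) := ha.1.anc_of_depth_le hb.1 hd
  have hx : R.T.Anc u x := ha.2.anc_of_depth_le hu.2 hux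
  exact ⟨⟨htop.trans hu.1, hx.trans hb.2⟩, hux⟩

end RDVData

/-- If `v` maximizes `y(t(v))` and the neighbours of `v` are sorted by
decreasing depth of their top endpoints, then the paths restricted to depth at most
`y(t(v))` form an increasing chain under inclusion. -/
theorem stmt8 {N n : ℕ} (G : SimpleGraph (Fin n)) (R : RDVData N n)
    (hrep : R.IsRep G) (v : Fin n)
    (hmax : ∀ w, R.T.depth (R.t w) ≤ R.T.depth (R.t v)) :
    ∀ l : List (Fin n), (∀ w, w ∈ l ↔ G.Adj v w) →
      l.Pairwise (fun a b => R.T.depth (R.t b) ≤ R.T.depth (R.t a)) →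
      l.Chain' (fun a b =>
        {u | R.onPath a u ∧ R.T.depth u ≤ R.T.depth (R.t v)} ⊆
          {u | R.onPath b u ∧ R.T.depth u ≤ R.T.depth (R.t v)}) := by
  intro l hl hsorted
  have hnbr : ∀ w ∈ l, R.onPath w (R.t v) := fun w hw =>
    R.onPath_top_of_adj hrep ((hl w).mp hw) (hmax w)
  refine (hsorted.imp_of_mem fun ha hb hd => ?_).isChain
  exact R.restrictedPath_subset (hnbr _ ha) (hnbr _ hb) hd
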